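/- Let (X,ρ) be a metric space, let P be an abstract porosity on X, and let A ⊆ X be a set that is not σ-P-porous. Then the set of all points x ∈ K_P(A) at which K_P(A) is not P-porous (i.e., at which P(x, K_P(A)) fails) is dense in K_P(A). -/

import Mathlib

open Metric Filter Set

/-- An abstract porosity on a metric space `X`: a relation between points and subsets
of `X` satisfying the axioms (A1), (A2), (A3). -/
structure AbstractPorosity (X : Type*) [MetricSpace X] where
  rel : X → Set X → Prop
  mono : ∀ (x : X) (A B : Set X), A ⊆ B → rel x B → rel x A
  loc : ∀ (x : X) (A : Set X), rel x A ↔ ∃ r > 0, rel x (A ∩ Metric.ball x r)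
  clos : ∀ (x : X) (A : Set X), rel x A ↔ rel x (closure A)

variable {X : Type*} [MetricSpace X]

/-- `A` is `P`-porous if `P(x,A)` holds at each point `x ∈ A`. -/
def AbstractPorosity.Porous (P : AbstractPorosity X) (A : Set X) : Prop :=
  ∀ x ∈ A, P.rel x A

/-- `A` is σ-`P`-porous if it is a countable union of `P`-porous sets. -/
def AbstractPorosity.SigmaPorous (P : AbstractPorosity X) (A : Set X) : Prop :=
  ∃ f : ℕ → Set X, (∀ n, P.Porous (f n)) ∧ A = ⋃ n, f n

/-- `A` is σ-`P`-porous at `x` if some `A ∩ B(x,r)` (r>0) is σ-`P`-porous. -/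
def AbstractPorosity.SigmaPorousAt (P : AbstractPorosity X) (A : Set X) (x : X) : Prop :=
  ∃ r > 0, P.SigmaPorous (A ∩ Metric.ball x r)

/-- The kernel `K_P(A)`: points of `A` at which `A` is not σ-`P`-porous. -/
def AbstractPorosity.kernel (P : AbstractPorosity X) (A : Set X) : Set X :=
  {x ∈ A | ¬ P.SigmaPorousAt A x}

/-! Suppose `x ∈ K_P(A)` had a ball `B(x,ε)` containing no point at which `K_P(A)` fails
to be porous. Then `K_P(A) ∩ B(x,ε)` is `P`-porous, and `A \ K_P(A)` is σ-`P`-porous because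
σ-porosity is a local property; so `A ∩ B(x,ε)` is σ-`P`-porous, contradicting `x ∈ K_P(A)`.

Locality: if each `z ∈ A` has a ball `B(z, r z)` meeting `A` in a σ-porous set, send every
`x ∈ A` to the least centre `c x`, for a well-order of `X`, whose ball contains `x`. Two points
lying in each other's chosen balls then have the same centre, so the points `x` of the `k`-th
porous piece of `A ∩ B(c x, r (c x))` with `B(x, 1/(m+1)) ⊆ B(c x, r (c x))` form a porous set,
and these countably many sets cover `A`. -/

theorem exists_center_choice {α : Type*} (s : Set α) (U : α → Set α)
    (hU : ∀ x ∈ s, x ∈ U x) :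
    ∃ c : α → α, (∀ x ∈ s, c x ∈ s ∧ x ∈ U (c x)) ∧
      ∀ x ∈ s, ∀ y ∈ s, x ∈ U (c y) → y ∈ U (c x) → c x = c y := by
  have wf : WellFounded (WellOrderingRel : α → α → Prop) := IsWellFounded.wf
  have hmin : ∀ x, ∃ z, x ∈ s → (z ∈ s ∧ x ∈ U z) ∧
      ∀ w ∈ s, x ∈ U w → ¬ WellOrderingRel w z := by
    intro x
    by_cases hx : x ∈ s
    · obtain ⟨z, hz, hz_min⟩ := wf.has_min {z | z ∈ s ∧ x ∈ U z} ⟨x, hx, hU x hx⟩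
      exact ⟨z, fun _ => ⟨hz, fun w hw hxw => hz_min w ⟨hw, hxw⟩⟩⟩
    · exact ⟨x, fun h => absurd h hx⟩
  choose c hc using hmin
  refine ⟨c, fun x hx => (hc x hx).1, fun x hx y hy hxy hyx => ?_⟩
  rcases trichotomous_of WellOrderingRel (c x) (c y) with hlt | heq | hgt
  · exact absurd hlt ((hc y hy).2 (c x) (hc x hx).1.1 hyx)
  · exact heq
  · exact absurd hgt ((hc x hx).2 (c y) (hc y hy).1.1 hxy)

namespace AbstractPorosity

variable {P : AbstractPorosity X}

theorem Porous.mono {A B : Set X} (hB : P.Porous B) (hAB : A ⊆ B) : P.Porous A :=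
  fun x hx => P.mono x A B hAB (hB x (hAB hx))

theorem Porous.sigmaPorous {A : Set X} (hA : P.Porous A) : P.SigmaPorous A :=
  ⟨fun _ => A, fun _ => hA, (iUnion_const A).symm⟩

theorem SigmaPorous.mono {A B : Set X} (hB : P.SigmaPorous B) (hAB : A ⊆ B) :
    P.SigmaPorous A := by
  obtain ⟨f, hf, rfl⟩ := hB
  exact ⟨fun n => f n ∩ A, fun n => (hf n).mono inter_subset_left,
    by rw [← iUnion_inter, inter_eq_right.2 hAB]⟩

theorem sigmaPorous_iUnion_of_porous {ι : Type*} [Countable ι] {f : ι → Set X}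
    (hf : ∀ i, P.Porous (f i)) : P.SigmaPorous (⋃ i, f i) := by
  obtain ⟨e, he⟩ := exists_surjective_nat (Option ι)
  refine ⟨fun n => (e n).elim ∅ f, fun n => ?_, ?_⟩
  · show P.Porous ((e n).elim ∅ f)
    cases e n with
    | none => simp [Porous]
    | some i => exact hf i
  · rw [he.iUnion_comp (fun o => o.elim ∅ f), iUnion_option]
    simp

theorem SigmaPorous.iUnion {ι : Type*} [Countable ι] {s : ι → Set X}
    (hs : ∀ i, P.SigmaPorous (s i)) : P.SigmaPorous (⋃ i, s i) := by
  choose f hf hs using hs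
  simp_rw [hs, ← iUnion_prod' fun p : ι × ℕ => f p.1 p.2]
  exact sigmaPorous_iUnion_of_porous fun p => hf p.1 p.2

theorem SigmaPorous.union {A B : Set X} (hA : P.SigmaPorous A) (hB : P.SigmaPorous B) :
    P.SigmaPorous (A ∪ B) := by
  rw [union_eq_iUnion]
  exact SigmaPorous.iUnion (Bool.forall_bool.2 ⟨hB, hA⟩)

theorem sigmaPorous_of_forall_sigmaPorousAt {A : Set X}
    (h : ∀ x ∈ A, P.SigmaPorousAt A x) : P.SigmaPorous A := by
  unfold SigmaPorousAt SigmaPorous at h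
  choose! r hr f hf hAf using h
  obtain ⟨c, hc, hc_eq⟩ :=
    exists_center_choice A (fun z => ball z (r z)) fun x hx => mem_ball_self (hr x hx)
  let Q : ℕ × ℕ → Set X := fun p =>
    {x | x ∈ A ∧ x ∈ f (c x) p.1 ∧ ball x (1 / (p.2 + 1)) ⊆ ball (c x) (r (c x))}
  have hQ : ∀ p, P.Porous (Q p) := by
    rintro ⟨k, m⟩ x ⟨hxA, hxf, hxc⟩
    have hsub : Q (k, m) ∩ ball x (1 / (m + 1)) ⊆ f (c x) k := by
      rintro y ⟨⟨hyA, hyf, hyc⟩, hxy⟩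
      have hyx : x ∈ ball y (1 / (m + 1)) := mem_ball_comm.1 hxy
      rwa [hc_eq y hyA x hxA (hxc hxy) (hyc hyx)] at hyf
    exact (P.loc x _).2 ⟨1 / (m + 1), by positivity,
      P.mono x _ _ hsub (hf (c x) (hc x hxA).1 k x hxf)⟩
  have hAQ : A = ⋃ p, Q p := by
    refine Subset.antisymm (fun x hxA => ?_) (iUnion_subset fun p x hx => hx.1)
    have hxc : x ∈ ball (c x) (r (c x)) := (hc x hxA).2
    have hx_piece : x ∈ A ∩ ball (c x) (r (c x)) := ⟨hxA, hxc⟩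
    rw [hAf (c x) (hc x hxA).1, mem_iUnion] at hx_piece
    obtain ⟨k, hk⟩ := hx_piece
    obtain ⟨m, hm⟩ := exists_nat_one_div_lt (sub_pos.2 (mem_ball.1 hxc))
    exact mem_iUnion.2 ⟨(k, m), hxA, hk, ball_subset_ball' (by linarith)⟩
  exact hAQ ▸ sigmaPorous_iUnion_of_porous hQ

variable (P) in
theorem sigmaPorous_diff_kernel (A : Set X) : P.SigmaPorous (A \ P.kernel A) := by
  refine sigmaPorous_of_forall_sigmaPorousAt fun x hx => ?_
  have hAx : P.SigmaPorousAt A x := by_contra fun h => hx.2 ⟨hx.1, h⟩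
  obtain ⟨r, hr, hσ⟩ := hAx
  exact ⟨r, hr, hσ.mono (inter_subset_inter_left _ sdiff_subset)⟩

theorem sigmaPorousAt_of_forall_rel_kernel {A : Set X} {x : X} {r : ℝ} (hr : 0 < r)
    (h : ∀ y ∈ P.kernel A ∩ ball x r, P.rel y (P.kernel A)) : P.SigmaPorousAt A x := by
  have hK : P.Porous (P.kernel A ∩ ball x r) :=
    fun y hy => P.mono y _ _ inter_subset_left (h y hy)
  have hsplit : A ∩ ball x r ⊆ (P.kernel A ∩ ball x r) ∪ (A \ P.kernel A) := fun y hy =>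
    (em (y ∈ P.kernel A)).imp (fun hyK => ⟨hyK, hy.2⟩) (fun hyK => ⟨hy.1, hyK⟩)
  exact ⟨r, hr, (hK.sigmaPorous.union (P.sigmaPorous_diff_kernel A)).mono hsplit⟩

end AbstractPorosity

theorem dense_not_porousAt_points_of_kernel_general {X : Type*} [MetricSpace X]
    (P : AbstractPorosity X) (A : Set X) :
    P.kernel A ⊆ closure {x ∈ P.kernel A | ¬ P.rel x (P.kernel A)} := by
  intro x hx
  by_contra hx_cl
  obtain ⟨ε, hε, hball⟩ := Metric.isOpen_iff.1 isClosed_closure.isOpen_compl x hx_cl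
  refine hx.2 (AbstractPorosity.sigmaPorousAt_of_forall_rel_kernel hε fun y hy => ?_)
  by_contra hrel
  exact hball hy.2 (subset_closure ⟨hy.1, hrel⟩)

/-- If `A` is not σ-`P`-porous, then the set of points of `K_P(A)` at which `K_P(A)`
is not `P`-porous is dense in `K_P(A)`. -/
theorem dense_not_porousAt_points_of_kernel {X : Type*} [MetricSpace X]
    (P : AbstractPorosity X) (A : Set X) (hA : ¬ P.SigmaPorous A) :
    P.kernel A ⊆ closure {x ∈ P.kernel A | ¬ P.rel x (P.kernel A)} :=
  dense_not_porousAt_points_of_kernel_general P A
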